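/- arXiv:2301.12407 — 3 statements merged into one kernel-verified Lean document; each statement's English description precedes it below -/
import Mathlib

section
/- Let N ≥ 1, let f : Fin N → ℝ, let τ > 0, and let q : Fin N → ℝ be a prior distribution with q_i > 0 for all i and ∑_{i=1}^N q_i = 1. Define the prior-weighted EBA weights p*_i = q_i · exp(f_i/τ) / ∑_{j=1}^N q_j · exp(f_j/τ), and set μ = ∑_{i=1}^N p*_i f_i. Then for every weight vector p : Fin N → ℝ with p_i ≥ 0 for all i, ∑_{i=1}^N p_i = 1, and ∑_{i=1}^N p_i f_i = μ, the relative entropy with respect to the prior satisfies ∑_{i=1}^N p_i · (log p_i − log q_i) ≥ ∑_{i=1}^N p*_i · (log p*_i − log q_i); i.e. p* maximizes −∑_i p_i log(p_i/q_i) subject to the simplex and mean-loss constraints. -/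
/-- Prior-weighted EBA weights minimize the relative entropy (maximize the entropy with
prior) subject to the simplex and mean-loss constraints. -/
theorem eba_prior_max_entropy (N : ℕ) (hN : 1 ≤ N) (f : Fin N → ℝ) (τ : ℝ) (hτ : 0 < τ)
    (q : Fin N → ℝ) (hq0 : ∀ i, 0 < q i) (hq1 : ∑ i, q i = 1)
    (pstar : Fin N → ℝ)
    (hpstar : ∀ i, pstar i = q i * Real.exp (f i / τ) / ∑ j, q j * Real.exp (f j / τ))
    (μ : ℝ) (hμ : μ = ∑ i, pstar i * f i)
    (p : Fin N → ℝ) (hp0 : ∀ i, 0 ≤ p i) (hp1 : ∑ i, p i = 1)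
    (hpμ : ∑ i, p i * f i = μ) :
    ∑ i, pstar i * (Real.log (pstar i) - Real.log (q i)) ≤
      ∑ i, p i * (Real.log (p i) - Real.log (q i)) := by
  set Z : ℝ := ∑ j, q j * Real.exp (f j / τ) with hZ
  have hZpos : 0 < Z := by
    apply Finset.sum_pos
    · intro i _; exact mul_pos (hq0 i) (Real.exp_pos _)
    · exact Finset.univ_nonempty_iff.mpr ⟨⟨0, hN⟩⟩
  have hps_pos : ∀ i, 0 < pstar i := fun i => by
    rw [hpstar i]; exact div_pos (mul_pos (hq0 i) (Real.exp_pos _)) hZpos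
  have hps1 : ∑ i, pstar i = 1 := by
    simp only [hpstar]
    rw [← Finset.sum_div, ← hZ, div_self hZpos.ne']
  have hlog : ∀ i, Real.log (pstar i) - Real.log (q i) = f i / τ - Real.log Z := by
    intro i
    rw [hpstar i, Real.log_div (mul_pos (hq0 i) (Real.exp_pos _)).ne' hZpos.ne',
      Real.log_mul (hq0 i).ne' (Real.exp_pos _).ne', Real.log_exp]
    ring
  -- LHS equals μ/τ - log Z
  have hLHS : ∑ i, pstar i * (Real.log (pstar i) - Real.log (q i)) = μ / τ - Real.log Z := by
    calc ∑ i, pstar i * (Real.log (pstar i) - Real.log (q i))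
        = ∑ i, (pstar i * f i / τ - pstar i * Real.log Z) := by
          apply Finset.sum_congr rfl; intro i _; rw [hlog i]; ring
      _ = (∑ i, pstar i * f i) / τ - (∑ i, pstar i) * Real.log Z := by
          rw [Finset.sum_sub_distrib, ← Finset.sum_div, ← Finset.sum_mul]
      _ = μ / τ - Real.log Z := by rw [← hμ, hps1, one_mul]
  rw [hLHS]
  -- RHS ≥ ∑ p_i (log pstar_i - log q_i) = μ/τ - log Z
  have hmid : ∑ i, p i * (Real.log (pstar i) - Real.log (q i)) = μ / τ - Real.log Z := by
    calc ∑ i, p i * (Real.log (pstar i) - Real.log (q i))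
        = ∑ i, (p i * f i / τ - p i * Real.log Z) := by
          apply Finset.sum_congr rfl; intro i _; rw [hlog i]; ring
      _ = (∑ i, p i * f i) / τ - (∑ i, p i) * Real.log Z := by
          rw [Finset.sum_sub_distrib, ← Finset.sum_div, ← Finset.sum_mul]
      _ = μ / τ - Real.log Z := by rw [hpμ, hp1, one_mul]
  rw [← hmid]
  -- Gibbs: ∑ p_i (log pstar_i - log p_i) ≤ ∑ (pstar_i - p_i) = 0
  have key : ∑ i, p i * (Real.log (pstar i) - Real.log (p i)) ≤ 0 := by
    have h1 : ∀ i ∈ Finset.univ, p i * (Real.log (pstar i) - Real.log (p i))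
        ≤ pstar i - p i := by
      intro i _
      rcases eq_or_lt_of_le (hp0 i) with h | h
      · rw [← h]; simpa using (hps_pos i).le
      · have hd : 0 < pstar i / p i := div_pos (hps_pos i) h
        have := Real.log_le_sub_one_of_pos hd
        rw [Real.log_div (hps_pos i).ne' h.ne'] at this
        have := mul_le_mul_of_nonneg_left this h.le
        calc p i * (Real.log (pstar i) - Real.log (p i))
            ≤ p i * (pstar i / p i - 1) := this
          _ = pstar i - p i := by field_simp
    calc ∑ i, p i * (Real.log (pstar i) - Real.log (p i))
        ≤ ∑ i, (pstar i - p i) := Finset.sum_le_sum h1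
      _ = 0 := by rw [Finset.sum_sub_distrib, hps1, hp1, sub_self]
  have hdiff : ∑ i, p i * (Real.log (pstar i) - Real.log (q i))
      = ∑ i, p i * (Real.log (p i) - Real.log (q i))
        + ∑ i, p i * (Real.log (pstar i) - Real.log (p i)) := by
    rw [← Finset.sum_add_distrib]
    apply Finset.sum_congr rfl; intro i _; ring
  linarith
end

section
/- Let E be a real inner product space, m ≥ 1, g : Fin m → E, and let w, p : Fin m → ℝ satisfy w_i ≥ 0, p_i > 0, ∑_{i=1}^m w_i = 1, ∑_{i=1}^m p_i = 1. Define G = ∑_{i=1}^m w_i • g_i, G̃ = ∑_{i=1}^m p_i • g_i, and χ² = ∑_{i=1}^m (w_i − p_i)² / p_i. If for constants A ≥ 0 and σ_G ≥ 0 the gradient-dissimilarity bound ∑_{i=1}^m p_i · ‖g_i − G̃‖² ≤ A² · ‖G̃‖² + σ_G² holds, then ‖G − G̃‖² ≤ χ² · (A² · ‖G̃‖² + σ_G²). -/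
/-- Chi-square gradient-gap lemma: the gap between the `w`-aggregated and `p`-aggregated
gradients is controlled by the chi-square divergence times the dissimilarity bound. -/
theorem chiSq_gradient_gap {E : Type*} [NormedAddCommGroup E] [InnerProductSpace ℝ E]
    (m : ℕ) (hm : 1 ≤ m) (g : Fin m → E) (w p : Fin m → ℝ)
    (hw0 : ∀ i, 0 ≤ w i) (hp0 : ∀ i, 0 < p i)
    (hw1 : ∑ i, w i = 1) (hp1 : ∑ i, p i = 1)
    (A σG : ℝ) (hA : 0 ≤ A) (hσ : 0 ≤ σG)
    (hdiss : ∑ i, p i * ‖g i - ∑ j, p j • g j‖ ^ 2 ≤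
      A ^ 2 * ‖∑ j, p j • g j‖ ^ 2 + σG ^ 2) :
    ‖(∑ i, w i • g i) - ∑ j, p j • g j‖ ^ 2 ≤
      (∑ i, (w i - p i) ^ 2 / p i) *
        (A ^ 2 * ‖∑ j, p j • g j‖ ^ 2 + σG ^ 2) := by
  set Gt : E := ∑ j, p j • g j with hGt
  have hrw : (∑ i, w i • g i) - Gt = ∑ i, (w i - p i) • (g i - Gt) := by
    have : ∑ i, (w i - p i) • (g i - Gt)
        = (∑ i, w i • g i) - (∑ i, p i • g i) - ((∑ i, w i) - ∑ i, p i) • Gt := by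
      simp [sub_smul, smul_sub, Finset.sum_sub_distrib, Finset.sum_smul]
      try abel
    rw [this, hw1, hp1]
    simp [hGt]
  have hnorm : ‖(∑ i, w i • g i) - Gt‖ ≤ ∑ i, |w i - p i| * ‖g i - Gt‖ := by
    rw [hrw]
    refine (norm_sum_le _ _).trans ?_
    refine Finset.sum_le_sum fun i _ => ?_
    rw [norm_smul, Real.norm_eq_abs]
  have hchi0 : 0 ≤ ∑ i, (w i - p i) ^ 2 / p i :=
    Finset.sum_nonneg fun i _ => div_nonneg (sq_nonneg _) (hp0 i).le
  have hCS : (∑ i, |w i - p i| * ‖g i - Gt‖) ^ 2 ≤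
      (∑ i, (w i - p i) ^ 2 / p i) * ∑ i, p i * ‖g i - Gt‖ ^ 2 := by
    have key : ∀ i : Fin m, |w i - p i| * ‖g i - Gt‖
        = (|w i - p i| / Real.sqrt (p i)) * (Real.sqrt (p i) * ‖g i - Gt‖) := by
      intro i
      have hs : Real.sqrt (p i) ≠ 0 := ne_of_gt (Real.sqrt_pos.mpr (hp0 i))
      field_simp
    calc (∑ i, |w i - p i| * ‖g i - Gt‖) ^ 2
        = (∑ i, (|w i - p i| / Real.sqrt (p i)) * (Real.sqrt (p i) * ‖g i - Gt‖)) ^ 2 := by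
          rw [Finset.sum_congr rfl fun i _ => key i]
      _ ≤ (∑ i, (|w i - p i| / Real.sqrt (p i)) ^ 2) *
            ∑ i, (Real.sqrt (p i) * ‖g i - Gt‖) ^ 2 :=
          Finset.sum_mul_sq_le_sq_mul_sq _ _ _
      _ = (∑ i, (w i - p i) ^ 2 / p i) * ∑ i, p i * ‖g i - Gt‖ ^ 2 := by
          congr 1
          · refine Finset.sum_congr rfl fun i _ => ?_
            rw [div_pow, sq_abs, Real.sq_sqrt (hp0 i).le]
          · refine Finset.sum_congr rfl fun i _ => ?_
            rw [mul_pow, Real.sq_sqrt (hp0 i).le]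
  calc ‖(∑ i, w i • g i) - Gt‖ ^ 2
      ≤ (∑ i, |w i - p i| * ‖g i - Gt‖) ^ 2 := by
        apply pow_le_pow_left₀ (norm_nonneg _) hnorm
    _ ≤ (∑ i, (w i - p i) ^ 2 / p i) * ∑ i, p i * ‖g i - Gt‖ ^ 2 := hCS
    _ ≤ (∑ i, (w i - p i) ^ 2 / p i) * (A ^ 2 * ‖Gt‖ ^ 2 + σG ^ 2) :=
        mul_le_mul_of_nonneg_left hdiss hchi0
end

section
/- Let E be a real inner product space, m ≥ 1, g : Fin m → E, and let w, p : Fin m → ℝ satisfy w_i ≥ 0, p_i > 0, ∑_{i=1}^m w_i = 1, ∑_{i=1}^m p_i = 1. Define G = ∑_{i=1}^m w_i • g_i, G̃ = ∑_{i=1}^m p_i • g_i, and χ² = ∑_{i=1}^m (w_i − p_i)² / p_i. If for constants A ≥ 0 and σ_G ≥ 0 the gradient-dissimilarity bound ∑_{i=1}^m p_i · ‖g_i − G̃‖² ≤ A² · ‖G̃‖² + σ_G² holds, then ‖G‖² ≤ 2 · (χ² · A² + 1) · ‖G̃‖² + 2 · χ² · σ_G². -/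
/-- Bound on the true aggregated gradient norm in terms of the surrogate aggregated
gradient norm and the chi-square divergence. -/
theorem chiSq_gradient_bound {E : Type*} [NormedAddCommGroup E] [InnerProductSpace ℝ E]
    (m : ℕ) (hm : 1 ≤ m) (g : Fin m → E) (w p : Fin m → ℝ)
    (hw0 : ∀ i, 0 ≤ w i) (hp0 : ∀ i, 0 < p i)
    (hw1 : ∑ i, w i = 1) (hp1 : ∑ i, p i = 1)
    (A σG : ℝ) (hA : 0 ≤ A) (hσ : 0 ≤ σG)
    (hdiss : ∑ i, p i * ‖g i - ∑ j, p j • g j‖ ^ 2 ≤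
      A ^ 2 * ‖∑ j, p j • g j‖ ^ 2 + σG ^ 2) :
    ‖∑ i, w i • g i‖ ^ 2 ≤
      2 * ((∑ i, (w i - p i) ^ 2 / p i) * A ^ 2 + 1) * ‖∑ j, p j • g j‖ ^ 2 +
        2 * (∑ i, (w i - p i) ^ 2 / p i) * σG ^ 2 := by
  set T : E := ∑ j, p j • g j with hT
  set χ : ℝ := ∑ i, (w i - p i) ^ 2 / p i with hχ
  have hχ0 : 0 ≤ χ := Finset.sum_nonneg fun i _ =>
    div_nonneg (sq_nonneg _) (hp0 i).le
  set S : E := ∑ i, (w i - p i) • (g i - T) with hS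
  have hsum0 : ∑ i, (w i - p i) = 0 := by
    rw [Finset.sum_sub_distrib, hw1, hp1]; ring
  have hdecomp : (∑ i, w i • g i) = T + S := by
    rw [hS, hT]
    rw [Finset.sum_congr rfl (fun i _ => smul_sub (w i - p i) (g i) T),
      Finset.sum_sub_distrib, ← Finset.sum_smul, hsum0, zero_smul, sub_zero]
    rw [← Finset.sum_add_distrib]
    refine Finset.sum_congr rfl fun i _ => ?_
    rw [← add_smul]; ring_nf
  -- Cauchy-Schwarz bound on ‖S‖²
  have hP : 0 ≤ ∑ i, p i * ‖g i - T‖ ^ 2 :=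
    Finset.sum_nonneg fun i _ => mul_nonneg (hp0 i).le (sq_nonneg _)
  have hS2 : ‖S‖ ^ 2 ≤ χ * ∑ i, p i * ‖g i - T‖ ^ 2 := by
    have h1 : ‖S‖ ≤ ∑ i, |w i - p i| * ‖g i - T‖ := by
      calc ‖S‖ ≤ ∑ i, ‖(w i - p i) • (g i - T)‖ := norm_sum_le _ _
        _ = ∑ i, |w i - p i| * ‖g i - T‖ := by
            simp [norm_smul, Real.norm_eq_abs]
    have h2 : (∑ i, |w i - p i| * ‖g i - T‖) ^ 2 ≤ χ * ∑ i, p i * ‖g i - T‖ ^ 2 := by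
      have := Finset.sum_mul_sq_le_sq_mul_sq Finset.univ
        (fun i => |w i - p i| / Real.sqrt (p i))
        (fun i => Real.sqrt (p i) * ‖g i - T‖)
      have heq : ∀ i : Fin m, |w i - p i| / Real.sqrt (p i) * (Real.sqrt (p i) * ‖g i - T‖)
          = |w i - p i| * ‖g i - T‖ := fun i => by
        have : Real.sqrt (p i) ≠ 0 := (Real.sqrt_pos.mpr (hp0 i)).ne'
        field_simp
      have heq2 : ∀ i : Fin m, (|w i - p i| / Real.sqrt (p i)) ^ 2 = (w i - p i) ^ 2 / p i :=
        fun i => by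
          rw [div_pow, Real.sq_sqrt (hp0 i).le, sq_abs]
      have heq3 : ∀ i : Fin m, (Real.sqrt (p i) * ‖g i - T‖) ^ 2 = p i * ‖g i - T‖ ^ 2 :=
        fun i => by rw [mul_pow, Real.sq_sqrt (hp0 i).le]
      simp only [heq, heq2, heq3] at this
      exact this
    calc ‖S‖ ^ 2 ≤ (∑ i, |w i - p i| * ‖g i - T‖) ^ 2 := by
          apply pow_le_pow_left₀ (norm_nonneg _) h1 2
      _ ≤ _ := h2
  have hS2' : ‖S‖ ^ 2 ≤ χ * (A ^ 2 * ‖T‖ ^ 2 + σG ^ 2) :=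
    hS2.trans (mul_le_mul_of_nonneg_left hdiss hχ0)
  have hGT : ‖T + S‖ ^ 2 ≤ 2 * ‖T‖ ^ 2 + 2 * ‖S‖ ^ 2 := by
    have h := norm_add_le T S
    have h2 : ‖T + S‖ ^ 2 ≤ (‖T‖ + ‖S‖) ^ 2 := pow_le_pow_left₀ (norm_nonneg _) h 2
    nlinarith [sq_nonneg (‖T‖ - ‖S‖)]
  rw [hdecomp]
  nlinarith [hGT, hS2']
end
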